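/- arXiv:1707.03015 — 3 statements merged into one kernel-verified Lean document; each statement's English description precedes it below -/
import Mathlib

section
/- Left-factor part of the centrally extended factorization theorem (Theorem 3 of the paper), derivation form: Let 𝔸 be a unital normed algebra and D : 𝔸 → 𝔸 a continuous derivation (a linear map with D(a·b) = D(a)·b + a·D(b)). Let F, Q, P, P̃ : ℝ → 𝔸 be curves with F, Q differentiable and F(t) invertible for every t, satisfying the centrally extended factorized evolution equations F'(t) = F(t)·P(t) − P̃(t)·F(t) and Q'(t) = Q(t)·P(t) − P̃(t)·Q(t) − F(t)·D(P(t)) for all t ∈ ℝ. Then the curve l(t) := F(t)⁻¹·Q(t) is differentiable and satisfies the centrally extended Lax flow l'(t) = l(t)·P(t) − P(t)·l(t) − D(P(t)) for all t ∈ ℝ (the abstract form of dl/dt = [l − d/dy, ∇γ(l)₊]). -/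
open Filter Topology

/-! Writing `l = F⁻¹ Q`, the product rule gives `l' = -F⁻¹ F' F⁻¹ Q + F⁻¹ Q'`, and the two
evolution equations turn this into `l P - P l - D P`: the `Pt`-terms cancel. The only analytic
input is the derivative of `Ring.inverse` along a unit-valued curve; `𝔸` is not assumed complete,
so instead of `hasFDerivAt_ring_inverse` it is derived from `b⁻¹ - a⁻¹ = b⁻¹ (a - b) a⁻¹`, which
also shows that inversion is continuous along such a curve. -/

theorem Filter.Tendsto.ring_inverse {α R : Type*} [NormedRing R] {l : Filter α} {f : α → R}
    {a : R} (hf : Tendsto f l (𝓝 a)) (ha : IsUnit a) (hfu : ∀ᶠ x in l, IsUnit (f x)) :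
    Tendsto (fun x => Ring.inverse (f x)) l (𝓝 (Ring.inverse a)) := by
  set b := ‖Ring.inverse a‖
  have hdist : Tendsto (fun x => ‖a - f x‖) l (𝓝 0) := by
    simpa only [norm_sub_rev] using tendsto_iff_norm_sub_tendsto_zero.mp hf
  have hsmall : ∀ᶠ x in l, b * ‖a - f x‖ < 1 / 2 := by
    have := hdist.const_mul b
    rw [mul_zero] at this
    exact this.eventually (eventually_lt_nhds (by norm_num))
  -- With `e = ‖f⁻¹ - a⁻¹‖` and `d = ‖a - f‖` we get `e ≤ (b + e) d b`,
  -- hence `e ≤ 2 b² d` once `b d ≤ 1/2`.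
  have hbound : ∀ᶠ x in l,
      ‖Ring.inverse (f x) - Ring.inverse a‖ ≤ 2 * b ^ 2 * ‖a - f x‖ := by
    filter_upwards [hfu, hsmall] with x hx hx_small
    have hdiff := Ring.inverse_sub_inverse (iff_of_true hx ha)
    set e := ‖Ring.inverse (f x) - Ring.inverse a‖
    have he : e ≤ (b + e) * ‖a - f x‖ * b :=
      calc e = ‖Ring.inverse (f x) * (a - f x) * Ring.inverse a‖ := congrArg (‖·‖) hdiff
        _ ≤ ‖Ring.inverse (f x)‖ * ‖a - f x‖ * b := norm_mul₃_le
        _ ≤ (b + e) * ‖a - f x‖ * b := by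
            gcongr
            exact norm_le_norm_add_norm_sub' _ _
    nlinarith [norm_nonneg (a - f x), norm_nonneg (Ring.inverse a), norm_nonneg
      (Ring.inverse (f x) - Ring.inverse a)]
  rw [tendsto_iff_norm_sub_tendsto_zero]
  refine squeeze_zero' (Eventually.of_forall fun _ => norm_nonneg _) hbound ?_
  simpa using hdist.const_mul (2 * b ^ 2)

theorem HasDerivAt.ring_inverse {𝕜 R : Type*} [NontriviallyNormedField 𝕜] [NormedRing R]
    [NormedAlgebra 𝕜 R] {f : 𝕜 → R} {f' : R} {x : 𝕜} (hf : HasDerivAt f f' x)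
    (hfu : ∀ᶠ y in 𝓝 x, IsUnit (f y)) :
    HasDerivAt (fun y => Ring.inverse (f y))
      (-(Ring.inverse (f x) * f' * Ring.inverse (f x))) x := by
  have hslope : ∀ᶠ y in 𝓝[≠] x, slope (fun y => Ring.inverse (f y)) x y
      = Ring.inverse (f y) * -slope f x y * Ring.inverse (f x) := by
    filter_upwards [nhdsWithin_le_nhds hfu] with y hy
    rw [slope_def_module, slope_def_module,
      Ring.inverse_sub_inverse (iff_of_true hy hfu.self_of_nhds), ← smul_neg, neg_sub,
      mul_smul_comm, smul_mul_assoc]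
  have hinv : Tendsto (fun y => Ring.inverse (f y)) (𝓝[≠] x) (𝓝 (Ring.inverse (f x))) :=
    (hf.continuousAt.tendsto.ring_inverse hfu.self_of_nhds hfu).mono_left nhdsWithin_le_nhds
  rw [hasDerivAt_iff_tendsto_slope]
  refine Tendsto.congr' (EventuallyEq.symm hslope) ?_
  simpa only [mul_neg, neg_mul] using
    (hinv.mul (hasDerivAt_iff_tendsto_slope.mp hf).neg).mul tendsto_const_nhds

theorem Ring.inverse_mul_factorized_flow {R : Type*} [Ring R] {f q p pt x : R} (hf : IsUnit f) :
    -(Ring.inverse f * (f * p - pt * f) * Ring.inverse f) * q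
        + Ring.inverse f * (q * p - pt * q - f * x)
      = Ring.inverse f * q * p - p * (Ring.inverse f * q) - x := by
  have hl : Ring.inverse f * f = 1 := Ring.inverse_mul_cancel _ hf
  have hr : f * Ring.inverse f = 1 := Ring.mul_inverse_cancel _ hf
  calc _ = -(Ring.inverse f * f * p * Ring.inverse f * q)
          + Ring.inverse f * pt * (f * Ring.inverse f) * q + Ring.inverse f * q * p
          - Ring.inverse f * pt * q - Ring.inverse f * f * x := by noncomm_ring
    _ = _ := by rw [hl, hr]; noncomm_ring

theorem centrally_extended_factorization_left_general
    {𝔸 : Type*} [NormedRing 𝔸] [NormedAlgebra ℝ 𝔸]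
    (D : 𝔸 →L[ℝ] 𝔸)
    (F Q P Pt F' Q' : ℝ → 𝔸)
    (hF : ∀ t : ℝ, HasDerivAt F (F' t) t)
    (hQ : ∀ t : ℝ, HasDerivAt Q (Q' t) t)
    (hFu : ∀ t : ℝ, IsUnit (F t))
    (hF' : ∀ t : ℝ, F' t = F t * P t - Pt t * F t)
    (hQ' : ∀ t : ℝ, Q' t = Q t * P t - Pt t * Q t - F t * D (P t)) :
    ∀ t : ℝ, HasDerivAt (fun s : ℝ => Ring.inverse (F s) * Q s)
      ((Ring.inverse (F t) * Q t) * P t - P t * (Ring.inverse (F t) * Q t)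
        - D (P t)) t := by
  intro t
  have h := ((hF t).ring_inverse (Eventually.of_forall hFu)).mul (hQ t)
  rwa [hF' t, hQ' t, Ring.inverse_mul_factorized_flow (hFu t)] at h

/-- Left-factor part of the centrally extended factorization theorem
(Theorem 3), derivation form: if `D` is a continuous derivation of `𝔸`,
`F' = F·P − Pt·F` and `Q' = Q·P − Pt·Q − F·D(P)` with `F` unit-valued, then
`l := F⁻¹·Q` satisfies the centrally extended Lax flow
`l' = l·P − P·l − D(P)`. -/
theorem centrally_extended_factorization_left
    {𝔸 : Type*} [NormedRing 𝔸] [NormedAlgebra ℝ 𝔸]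
    (D : 𝔸 →L[ℝ] 𝔸) (hD : ∀ a b : 𝔸, D (a * b) = D a * b + a * D b)
    (F Q P Pt F' Q' : ℝ → 𝔸)
    (hF : ∀ t : ℝ, HasDerivAt F (F' t) t)
    (hQ : ∀ t : ℝ, HasDerivAt Q (Q' t) t)
    (hFu : ∀ t : ℝ, IsUnit (F t))
    (hF' : ∀ t : ℝ, F' t = F t * P t - Pt t * F t)
    (hQ' : ∀ t : ℝ, Q' t = Q t * P t - Pt t * Q t - F t * D (P t)) :
    ∀ t : ℝ, HasDerivAt (fun s : ℝ => Ring.inverse (F s) * Q s)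
      ((Ring.inverse (F t) * Q t) * P t - P t * (Ring.inverse (F t) * Q t)
        - D (P t)) t :=
  centrally_extended_factorization_left_general D F Q P Pt F' Q' hF hQ hFu hF' hQ'
end

section
/- Representation formula (d6.24) of the paper: Let 𝔸 be a unital normed algebra, d ∈ 𝔸 a fixed element, P, P̃ : ℝ → 𝔸 curves, and let F, Q : ℝ → 𝔸 be differentiable with F'(t) = F(t)·P(t) − P̃(t)·F(t) and Q'(t) = Q(t)·P(t) − P̃(t)·Q(t) − F(t)·(d·P(t) − P(t)·d) for all t. Let Φ, Ψ : ℝ → 𝔸 be differentiable unit-valued curves with Φ'(t) = −P(t)·Φ(t) and Ψ'(t) = −P̃(t)·Ψ(t) for all t. Then the curves t ↦ Ψ(t)⁻¹·F(t)·Φ(t) and t ↦ Ψ(t)⁻¹·(Q(t) − F(t)·d)·Φ(t) are constant; equivalently, F(t) = Ψ(t)·F̄·Φ(t)⁻¹ and Q(t) − F(t)·d = Ψ(t)·(Q̄ − F̄·d)·Φ(t)⁻¹ for all t, where F̄ := Ψ(0)⁻¹·F(0)·Φ(0) and Q̄ − F̄·d := Ψ(0)⁻¹·(Q(0) − F(0)·d)·Φ(0)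 are constant with respect to t. -/
/-!
For `X' = X P - P̃ X`, `Φ' = -P Φ` and `Ψ' = -P̃ Ψ`, the product rule gives
`(Ψ⁻¹ X Φ)' = Ψ⁻¹ (P̃ X + X' - X P) Φ = 0`, so `Ψ⁻¹ X Φ` is constant. Both `F` and `Q - F d` solve
this equation: in `(Q - F d)' = Q' - F' d` the central-extension term `-F (d P - P d)` of `Q'` is
exactly what turns `Q P - P̃ Q - (F P - P̃ F) d` into `(Q - F d) P - P̃ (Q - F d)`.

Differentiating `Ψ⁻¹` needs no completeness of `𝔸`: on the set of units, the identity
`y⁻¹ - x⁻¹ = y⁻¹ (x - y) x⁻¹` first bounds `‖y⁻¹‖` near `x`, hence gives continuity, and then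
differentiability of `Ring.inverse` within the units in any normed algebra.
-/

open Filter Topology Asymptotics

namespace Ring

theorem mul_inverse_mul_mul_mul_inverse_cancel {M₀ : Type*} [MonoidWithZero M₀] {a b : M₀}
    (ha : IsUnit a) (hb : IsUnit b) (y : M₀) : a * (inverse a * y * b) * inverse b = y := by
  rw [mul_assoc (inverse a), mul_inverse_cancel_left _ _ ha, mul_inverse_cancel_right _ _ hb]

variable {R : Type*} [NormedRing R] {x : R}

theorem isBigO_inverse_sub (hx : IsUnit x) :
    (fun y ↦ inverse y - inverse x) =O[𝓝[{y | IsUnit y}] x] fun y ↦ y - x := by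
  set c := ‖inverse x‖
  refine IsBigO.of_bound (2 * c ^ 2) ?_
  have hsmall : ∀ᶠ y in 𝓝 x, c * ‖y - x‖ ≤ 1 / 2 := by
    have : Tendsto (fun y ↦ c * ‖y - x‖) (𝓝 x) (𝓝 0) := by
      simpa using (tendsto_sub_nhds_zero_iff.2 (tendsto_id (x := 𝓝 x))).norm.const_mul c
    exact this.eventually (eventually_le_nhds (by norm_num))
  filter_upwards [self_mem_nhdsWithin, nhdsWithin_le_nhds hsmall] with y (hy : IsUnit y) hyx
  have hle : ‖inverse y - inverse x‖ ≤ ‖inverse y‖ * c * ‖y - x‖ := by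
    rw [inverse_sub_inverse (iff_of_true hy hx)]
    calc _ ≤ ‖inverse y‖ * ‖x - y‖ * c := norm_mul₃_le
      _ = _ := by rw [norm_sub_rev]; ring
  have hy_bound : ‖inverse y‖ ≤ 2 * c := by
    -- `‖y⁻¹‖ ≤ ‖y⁻¹ - x⁻¹‖ + c ≤ ‖y⁻¹‖ / 2 + c`
    have := norm_le_norm_add_norm_sub' (inverse y) (inverse x)
    nlinarith [norm_nonneg (inverse y)]
  calc ‖inverse y - inverse x‖ ≤ ‖inverse y‖ * c * ‖y - x‖ := hle
    _ ≤ 2 * c * c * ‖y - x‖ := by gcongr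
    _ = _ := by ring

theorem continuousWithinAt_inverse (hx : IsUnit x) :
    ContinuousWithinAt inverse {y | IsUnit y} x := by
  have h := (isBigO_inverse_sub hx).trans_tendsto
    (tendsto_sub_nhds_zero_iff.2 (nhdsWithin_le_nhds (a := x)))
  simpa [ContinuousWithinAt] using h.add_const (inverse x)

variable {𝕜 : Type*} [NontriviallyNormedField 𝕜] [NormedAlgebra 𝕜 R]

theorem hasFDerivWithinAt_inverse (hx : IsUnit x) :
    HasFDerivWithinAt inverse (-ContinuousLinearMap.mulLeftRight 𝕜 R (inverse x) (inverse x))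
      {y | IsUnit y} x := by
  rw [hasFDerivWithinAt_iff_isLittleO]
  have hrem : ∀ y ∈ {y | IsUnit y}, inverse y - inverse x
      - (-ContinuousLinearMap.mulLeftRight 𝕜 R (inverse x) (inverse x)) (y - x)
      = (inverse x - inverse y) * ((y - x) * inverse x) := by
    intro y hy
    rw [neg_apply, ContinuousLinearMap.mulLeftRight_apply,
      inverse_sub_inverse (iff_of_true hy hx)]
    noncomm_ring
  have hsmall : (fun y ↦ inverse x - inverse y) =o[𝓝[{y | IsUnit y}] x] fun _ ↦ (1 : ℝ) := by
    rw [isLittleO_one_iff, ← sub_self (inverse x)]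
    exact tendsto_const_nhds.sub (continuousWithinAt_inverse hx).tendsto
  have hlin : (fun y ↦ (y - x) * inverse x) =O[𝓝[{y | IsUnit y}] x] fun y ↦ y - x :=
    IsBigO.of_bound ‖inverse x‖ (Eventually.of_forall fun y ↦ by
      rw [mul_comm ‖inverse x‖]; exact norm_mul_le _ _)
  have hprod := hsmall.mul_isBigO hlin.norm_right
  simp only [one_mul] at hprod
  exact (isLittleO_norm_right.mp hprod).congr'
    (Filter.EventuallyEq.symm (eventually_nhdsWithin_of_forall hrem)) EventuallyEq.rfl

end Ring

open Ring

variable {𝕜 R : Type*} [NontriviallyNormedField 𝕜] [NormedRing R] [NormedAlgebra 𝕜 R] in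
theorem HasDerivAt.ringInverse {f : 𝕜 → R} {f' : R} {t : 𝕜} (hf : HasDerivAt f f' t)
    (hu : ∀ᶠ s in 𝓝 t, IsUnit (f s)) :
    HasDerivAt (fun s ↦ inverse (f s)) (-(inverse (f t) * f' * inverse (f t))) t :=
  (hasFDerivWithinAt_inverse hu.self_of_nhds).comp_hasDerivAt t hf hu

section Gauge

variable {𝔸 : Type*} [NormedRing 𝔸] [NormedAlgebra ℝ 𝔸] {P Pt X Φ Ψ : ℝ → 𝔸}

theorem hasDerivAt_ringInverse_mul_mul_of_gauge {t : ℝ}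
    (hX : HasDerivAt X (X t * P t - Pt t * X t) t) (hΦ : HasDerivAt Φ (-(P t * Φ t)) t)
    (hΨ : HasDerivAt Ψ (-(Pt t * Ψ t)) t) (hΨu : ∀ᶠ s in 𝓝 t, IsUnit (Ψ s)) :
    HasDerivAt (fun s ↦ inverse (Ψ s) * X s * Φ s) 0 t := by
  have hV : -(inverse (Ψ t) * -(Pt t * Ψ t) * inverse (Ψ t)) = inverse (Ψ t) * Pt t := by
    rw [mul_neg, neg_mul, neg_neg, mul_assoc, mul_inverse_cancel_right _ _ hΨu.self_of_nhds]
  refine (((hΨ.ringInverse hΨu).mul hX).mul hΦ).congr_deriv ?_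
  rw [hV, Pi.mul_apply]
  noncomm_ring

theorem ringInverse_mul_mul_eq_of_gauge
    (hX : ∀ t, HasDerivAt X (X t * P t - Pt t * X t) t) (hΦ : ∀ t, HasDerivAt Φ (-(P t * Φ t)) t)
    (hΨ : ∀ t, HasDerivAt Ψ (-(Pt t * Ψ t)) t) (hΨu : ∀ t, IsUnit (Ψ t)) (s t : ℝ) :
    inverse (Ψ s) * X s * Φ s = inverse (Ψ t) * X t * Φ t :=
  have h := fun t ↦ hasDerivAt_ringInverse_mul_mul_of_gauge (hX t) (hΦ t) (hΨ t)
    (Eventually.of_forall hΨu)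
  is_const_of_deriv_eq_zero (fun t ↦ (h t).differentiableAt) (fun t ↦ (h t).deriv) s t

end Gauge

/-- Representation formula (d6.24): under the centrally extended factorized
evolution equations for `F, Q` and the dressing equations `Φ' = −P·Φ`,
`Ψ' = −Pt·Ψ` for unit-valued `Φ, Ψ`, the curves `Ψ⁻¹·F·Φ` and
`Ψ⁻¹·(Q − F·d)·Φ` are constant; equivalently `F = Ψ·F̄·Φ⁻¹` and
`Q − F·d = Ψ·(Q̄ − F̄·d)·Φ⁻¹` with the constants `F̄ := Ψ(0)⁻¹·F(0)·Φ(0)` and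
`Q̄ − F̄·d := Ψ(0)⁻¹·(Q(0) − F(0)·d)·Φ(0)`. -/
theorem centrally_extended_representation_formula
    {𝔸 : Type*} [NormedRing 𝔸] [NormedAlgebra ℝ 𝔸]
    (d : 𝔸) (P Pt F Q Φ Ψ : ℝ → 𝔸)
    (hF : ∀ t : ℝ, HasDerivAt F (F t * P t - Pt t * F t) t)
    (hQ : ∀ t : ℝ, HasDerivAt Q
      (Q t * P t - Pt t * Q t - F t * (d * P t - P t * d)) t)
    (hΦu : ∀ t : ℝ, IsUnit (Φ t)) (hΨu : ∀ t : ℝ, IsUnit (Ψ t))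
    (hΦ : ∀ t : ℝ, HasDerivAt Φ (-(P t * Φ t)) t)
    (hΨ : ∀ t : ℝ, HasDerivAt Ψ (-(Pt t * Ψ t)) t) :
    (∀ t : ℝ, Ring.inverse (Ψ t) * F t * Φ t
        = Ring.inverse (Ψ 0) * F 0 * Φ 0) ∧
    (∀ t : ℝ, Ring.inverse (Ψ t) * (Q t - F t * d) * Φ t
        = Ring.inverse (Ψ 0) * (Q 0 - F 0 * d) * Φ 0) ∧
    (∀ t : ℝ, F t
        = Ψ t * (Ring.inverse (Ψ 0) * F 0 * Φ 0) * Ring.inverse (Φ t)) ∧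
    (∀ t : ℝ, Q t - F t * d
        = Ψ t * (Ring.inverse (Ψ 0) * (Q 0 - F 0 * d) * Φ 0)
            * Ring.inverse (Φ t)) := by
  have hconst {X : ℝ → 𝔸} (hX : ∀ t, HasDerivAt X (X t * P t - Pt t * X t) t) (t : ℝ) :=
    ringInverse_mul_mul_eq_of_gauge hX hΦ hΨ hΨu t 0
  have hG (t : ℝ) : HasDerivAt (fun s ↦ Q s - F s * d)
      ((Q t - F t * d) * P t - Pt t * (Q t - F t * d)) t :=
    ((hQ t).sub ((hF t).mul_const d)).congr_deriv (by noncomm_ring)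
  refine ⟨hconst hF, hconst hG, fun t ↦ ?_, fun t ↦ ?_⟩
  · rw [← hconst hF t, mul_inverse_mul_mul_mul_inverse_cancel (hΨu t) (hΦu t)]
  · rw [← hconst hG t, mul_inverse_mul_mul_mul_inverse_cancel (hΨu t) (hΦu t)]
end

section
/- Right-factor centrally extended Lax flow (the form (d6.22b) used in Theorem 3 of the paper): Let 𝔸 be a unital normed algebra, d ∈ 𝔸 a fixed element, P, P̃ : ℝ → 𝔸 curves, and let F, Q : ℝ → 𝔸 be differentiable with F(t) invertible for all t, satisfying F'(t) = F(t)·P(t) − P̃(t)·F(t) and Q'(t) = Q(t)·P(t) − P̃(t)·Q(t) − F(t)·(d·P(t) − P(t)·d) for all t ∈ ℝ. Then the curve m(t) := (Q(t) − F(t)·d)·F(t)⁻¹ is differentiable and satisfies the Lax equation m'(t) = m(t)·P̃(t) − P̃(t)·m(t) for all t ∈ ℝ. -/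
/-!
Both `N := Q - F * d` and `F` solve the intertwining equation `X' = X * P - P̃ * X`: in `N'` the
term `-F * (d * P - P * d)` of `Q'` cancels the commutator that `F' * d` produces. For any two
solutions `N`, `F` with `F` invertible, `(F⁻¹)' = -F⁻¹ F' F⁻¹ = F⁻¹ P̃ - P F⁻¹`, so in `(N F⁻¹)'` the
`P`-terms cancel and the Lax equation for `N F⁻¹` remains.

Since `𝔸` need not be complete, the units need not form an open set, so `Ring.inverse` is
differentiated only within the set of units, using `y⁻¹ - x⁻¹ = y⁻¹ (x - y) x⁻¹`.
-/

open Filter Topology Asymptotics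
open scoped Ring

section NormedRing

variable {R : Type*} [NormedRing R]

theorem norm_ringInverse_le_two_mul {x y : R} (hx : IsUnit x) (hy : IsUnit y)
    (h : ‖y - x‖ * ‖x⁻¹ʳ‖ ≤ 1 / 2) : ‖y⁻¹ʳ‖ ≤ 2 * ‖x⁻¹ʳ‖ := by
  have hdiff : y⁻¹ʳ = x⁻¹ʳ + y⁻¹ʳ * (x - y) * x⁻¹ʳ := by
    rw [← Ring.inverse_sub_inverse (iff_of_true hy hx)]; abel
  have : ‖y⁻¹ʳ‖ ≤ ‖x⁻¹ʳ‖ + ‖y⁻¹ʳ‖ * (‖y - x‖ * ‖x⁻¹ʳ‖) :=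
    calc ‖y⁻¹ʳ‖ = ‖x⁻¹ʳ + y⁻¹ʳ * (x - y) * x⁻¹ʳ‖ := congrArg _ hdiff
      _ ≤ ‖x⁻¹ʳ‖ + ‖y⁻¹ʳ‖ * ‖x - y‖ * ‖x⁻¹ʳ‖ :=
        (norm_add_le _ _).trans (by gcongr; exact norm_mul₃_le)
      _ = _ := by rw [norm_sub_rev]; ring
  nlinarith [norm_nonneg y⁻¹ʳ]

theorem continuousWithinAt_ringInverse_setOf_isUnit {x : R} (hx : IsUnit x) :
    ContinuousWithinAt Ring.inverse {y | IsUnit y} x := by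
  have hsmall : ∀ᶠ y in 𝓝 x, ‖y - x‖ * ‖x⁻¹ʳ‖ < 1 / 2 := by
    have : Tendsto (fun y => ‖y - x‖ * ‖x⁻¹ʳ‖) (𝓝 x) (𝓝 0) := by
      simpa using (by fun_prop : Continuous fun y : R => ‖y - x‖ * ‖x⁻¹ʳ‖).tendsto x
    exact this.eventually_lt_const (by norm_num)
  rw [ContinuousWithinAt, tendsto_iff_norm_sub_tendsto_zero]
  refine squeeze_zero' (Eventually.of_forall fun _ => norm_nonneg _)
    (g := fun y => 2 * ‖x⁻¹ʳ‖ * ‖x⁻¹ʳ‖ * ‖y - x‖) ?_ ?_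
  · filter_upwards [self_mem_nhdsWithin, nhdsWithin_le_nhds hsmall] with y (hy : IsUnit y) hyx
    rw [Ring.inverse_sub_inverse (iff_of_true hy hx)]
    calc ‖y⁻¹ʳ * (x - y) * x⁻¹ʳ‖ ≤ ‖y⁻¹ʳ‖ * ‖y - x‖ * ‖x⁻¹ʳ‖ :=
          norm_sub_rev x y ▸ norm_mul₃_le
      _ ≤ 2 * ‖x⁻¹ʳ‖ * ‖y - x‖ * ‖x⁻¹ʳ‖ := by
          gcongr; exact norm_ringInverse_le_two_mul hx hy hyx.le
      _ = _ := by ring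
  · refine tendsto_nhdsWithin_of_tendsto_nhds ?_
    simpa using (tendsto_iff_norm_sub_tendsto_zero.mp (tendsto_id (x := 𝓝 x))).const_mul
      (2 * ‖x⁻¹ʳ‖ * ‖x⁻¹ʳ‖)

variable (𝕜 : Type*) [NontriviallyNormedField 𝕜] [NormedAlgebra 𝕜 R]

theorem hasFDerivWithinAt_ringInverse_setOf_isUnit {x : R} (hx : IsUnit x) :
    HasFDerivWithinAt Ring.inverse (-ContinuousLinearMap.mulLeftRight 𝕜 R x⁻¹ʳ x⁻¹ʳ)
      {y | IsUnit y} x := by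
  rw [hasFDerivWithinAt_iff_isLittleO]
  have hsmall : (fun y => x⁻¹ʳ - y⁻¹ʳ) =o[𝓝[{y | IsUnit y}] x] (fun _ => (1 : ℝ)) :=
    (isLittleO_one_iff ℝ).mpr (by
      simpa using (continuousWithinAt_ringInverse_setOf_isUnit hx).tendsto.const_sub x⁻¹ʳ)
  have hlin : (fun y => (y - x) * x⁻¹ʳ) =O[𝓝[{y | IsUnit y}] x] (fun y => ‖y - x‖) :=
    isBigO_of_le' _ fun y => (norm_mul_le _ _).trans_eq (by rw [norm_norm, mul_comm])
  refine isLittleO_norm_right.mp ?_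
  refine (hsmall.mul_isBigO hlin).congr' ?_ (by simp)
  filter_upwards [self_mem_nhdsWithin] with y (hy : IsUnit y)
  rw [Ring.inverse_sub_inverse (iff_of_true hy hx)]
  simp only [neg_apply, ContinuousLinearMap.mulLeftRight_apply]
  noncomm_ring

variable {𝕜}

theorem HasDerivAt.ringInverse_s12 {F : 𝕜 → R} {F' : R} {t : 𝕜} (hF : HasDerivAt F F' t)
    (hFu : ∀ᶠ s in 𝓝 t, IsUnit (F s)) :
    HasDerivAt (fun s => (F s)⁻¹ʳ) (-((F t)⁻¹ʳ * F' * (F t)⁻¹ʳ)) t :=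
  ((hasFDerivWithinAt_ringInverse_setOf_isUnit 𝕜 hFu.self_of_nhds).comp_hasDerivAt t hF
    hFu).congr_deriv (by simp)

theorem HasDerivAt.mul_ringInverse_of_intertwining {N F : 𝕜 → R} {P Pt : R} {t : 𝕜}
    (hN : HasDerivAt N (N t * P - Pt * N t) t) (hF : HasDerivAt F (F t * P - Pt * F t) t)
    (hFu : ∀ᶠ s in 𝓝 t, IsUnit (F s)) :
    HasDerivAt (fun s => N s * (F s)⁻¹ʳ) (N t * (F t)⁻¹ʳ * Pt - Pt * (N t * (F t)⁻¹ʳ)) t := by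
  refine (hN.mul (hF.ringInverse_s12 hFu)).congr_deriv ?_
  have hFG : F t * (F t)⁻¹ʳ = 1 := Ring.mul_inverse_cancel _ hFu.self_of_nhds
  have hGF : (F t)⁻¹ʳ * F t = 1 := Ring.inverse_mul_cancel _ hFu.self_of_nhds
  calc _ = (N t * P - Pt * N t) * (F t)⁻¹ʳ
        + N t * -((F t)⁻¹ʳ * F t * (P * (F t)⁻¹ʳ) - (F t)⁻¹ʳ * Pt * (F t * (F t)⁻¹ʳ)) := by
        noncomm_ring
    _ = _ := by rw [hFG, hGF]; noncomm_ring

end NormedRing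

/-- Right-factor centrally extended Lax flow (form (d6.22b) of Theorem 3):
if `F' = F·P − Pt·F` and `Q' = Q·P − Pt·Q − F·(d·P − P·d)` with `F`
unit-valued, then `m := (Q − F·d)·F⁻¹` satisfies the Lax equation
`m' = m·Pt − Pt·m`. -/
theorem centrally_extended_factorization_right
    {𝔸 : Type*} [NormedRing 𝔸] [NormedAlgebra ℝ 𝔸]
    (d : 𝔸) (P Pt F Q : ℝ → 𝔸) (F' Q' : ℝ → 𝔸)
    (hF : ∀ t : ℝ, HasDerivAt F (F' t) t)
    (hQ : ∀ t : ℝ, HasDerivAt Q (Q' t) t)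
    (hFu : ∀ t : ℝ, IsUnit (F t))
    (hF' : ∀ t : ℝ, F' t = F t * P t - Pt t * F t)
    (hQ' : ∀ t : ℝ, Q' t = Q t * P t - Pt t * Q t - F t * (d * P t - P t * d)) :
    ∀ t : ℝ, HasDerivAt (fun s : ℝ => (Q s - F s * d) * Ring.inverse (F s))
      (((Q t - F t * d) * Ring.inverse (F t)) * Pt t
        - Pt t * ((Q t - F t * d) * Ring.inverse (F t))) t := by
  intro t
  have hN : HasDerivAt (fun s => Q s - F s * d)
      ((Q t - F t * d) * P t - Pt t * (Q t - F t * d)) t := by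
    refine ((hQ t).sub ((hF t).mul_const d)).congr_deriv ?_
    rw [hQ' t, hF' t]; noncomm_ring
  exact hN.mul_ringInverse_of_intertwining (hF' t ▸ hF t) (Eventually.of_forall hFu)
end
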